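/- arXiv:2202.09610 — 5 statements merged into one kernel-verified Lean document; each statement's English description precedes it below -/
import Mathlib

section
/- Let α ∈ (0,2), β > 0, G be a symmetric positive definite n×n matrix, and B ∈ ℝ^{ℓ×m} have full column rank. Then the block matrix Γ_α = [[G,0,0],[0,(β/α)BᵀB,((1-α)/α)Bᵀ],[0,((1-α)/α)B,(1/(αβ))I_ℓ]] is symmetric positive definite. -/
open Matrix

section Aux

variable {p q : Type*} [Fintype p] [Fintype q] [DecidableEq p] [DecidableEq q]

lemma aux_smul_posDef {M : Matrix p p ℝ} (hM : M.PosDef) {c : ℝ} (hc : 0 < c) :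
    (c • M).PosDef := by
  refine Matrix.posDef_iff_dotProduct_mulVec.mpr ⟨?_, fun x hx => ?_⟩
  · show (c • M)ᴴ = c • M
    rw [Matrix.conjTranspose_smul, star_trivial, hM.1.eq]
  · have := hM.dotProduct_mulVec_pos hx
    simpa [Matrix.smul_mulVec, smul_eq_mul] using mul_pos hc this

lemma aux_transpose_mul_self_posDef (B : Matrix p q ℝ)
    (hB : Function.Injective B.mulVec) : (Bᵀ * B).PosDef := by
  have hH : (Bᵀ * B).IsHermitian := by
    have := Matrix.isHermitian_conjTranspose_mul_self B
    simpa using this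
  refine Matrix.posDef_iff_dotProduct_mulVec.mpr ⟨hH, fun x hx => ?_⟩
  have hBx : B *ᵥ x ≠ 0 := by
    intro h
    apply hx
    apply hB
    simpa using h
  have key : star x ⬝ᵥ (Bᵀ * B) *ᵥ x = star (B *ᵥ x) ⬝ᵥ (B *ᵥ x) := by
    have hT : Bᵀ = Bᴴ := by ext i j; simp
    rw [← Matrix.mulVec_mulVec, Matrix.dotProduct_mulVec, hT, ← Matrix.star_mulVec]
  rw [key]
  exact dotProduct_star_self_pos_iff.mpr hBx

lemma aux_fromBlocks_schur₂₂ {A : Matrix p p ℝ} (B : Matrix p q ℝ) {D : Matrix q q ℝ}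
    (hD : D.PosDef) (hS : (A - B * D⁻¹ * Bᴴ).PosDef) :
    (Matrix.fromBlocks A B Bᴴ D).PosDef := by
  haveI : Invertible D := hD.isUnit.invertible
  have hA : A.IsHermitian := by
    have := hS.1
    have h2 : (B * D⁻¹ * Bᴴ).IsHermitian := by
      have := Matrix.isHermitian_mul_mul_conjTranspose B (hD.1.inv)
      simpa [Matrix.mul_assoc] using this
    have : (A - B * D⁻¹ * Bᴴ + B * D⁻¹ * Bᴴ).IsHermitian := hS.1.add h2
    simpa using this
  refine Matrix.posDef_iff_dotProduct_mulVec.mpr ⟨(Matrix.isHermitian_fromBlocks_iff).2 ⟨hA, rfl, rfl, hD.1⟩, fun v hv => ?_⟩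
  set x : p → ℝ := v ∘ Sum.inl with hxdef
  set y : q → ℝ := v ∘ Sum.inr with hydef
  have hv' : v = Sum.elim x y := by
    funext i; cases i <;> rfl
  have key := Matrix.schur_complement_eq₂₂ (α := ℝ) A B x y hD.1
  have hrw : star v ⬝ᵥ (Matrix.fromBlocks A B Bᴴ D) *ᵥ v
      = star (Sum.elim x y) ᵥ* (Matrix.fromBlocks A B Bᴴ D) ⬝ᵥ (Sum.elim x y) := by
    rw [hv', Matrix.dotProduct_mulVec]
  rw [hrw, key]
  have hterm1 : ∀ z : q → ℝ, 0 ≤ star z ᵥ* D ⬝ᵥ z := by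
    intro z
    have := hD.posSemidef.dotProduct_mulVec_nonneg z
    rwa [Matrix.dotProduct_mulVec] at this
  have hterm2 : ∀ z : p → ℝ, 0 ≤ star z ᵥ* (A - B * D⁻¹ * Bᴴ) ⬝ᵥ z := by
    intro z
    have := hS.posSemidef.dotProduct_mulVec_nonneg z
    rwa [Matrix.dotProduct_mulVec] at this
  by_cases hx : x = 0
  · have hy : y ≠ 0 := by
      intro hy
      apply hv
      rw [hv', hx, hy]; simp
    have h1 : 0 < star ((D⁻¹ * Bᴴ) *ᵥ x + y) ᵥ* D ⬝ᵥ ((D⁻¹ * Bᴴ) *ᵥ x + y) := by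
      have hz : (D⁻¹ * Bᴴ) *ᵥ x + y ≠ 0 := by
        rw [hx]; simpa using hy
      have := hD.dotProduct_mulVec_pos hz
      rwa [Matrix.dotProduct_mulVec] at this
    have h2 := hterm2 x
    linarith
  · have h2 : 0 < star x ᵥ* (A - B * D⁻¹ * Bᴴ) ⬝ᵥ x := by
      have := hS.dotProduct_mulVec_pos hx
      rwa [Matrix.dotProduct_mulVec] at this
    have h1 := hterm1 ((D⁻¹ * Bᴴ) *ᵥ x + y)
    linarith

lemma aux_fromBlocks_diag {A : Matrix p p ℝ} {D : Matrix q q ℝ}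
    (hA : A.PosDef) (hD : D.PosDef) :
    (Matrix.fromBlocks A 0 0 D).PosDef := by
  have h0 : (0 : Matrix p q ℝ)ᴴ = 0 := by simp
  have := aux_fromBlocks_schur₂₂ (A := A) (0 : Matrix p q ℝ) hD (by simpa using hA)
  rw [h0] at this
  exact this

end Aux

theorem gamma_alpha_posDef
    (n m l : ℕ) (α β : ℝ) (hα : α ∈ Set.Ioo (0:ℝ) 2) (hβ : 0 < β)
    (G : Matrix (Fin n) (Fin n) ℝ) (hG : G.PosDef)
    (B : Matrix (Fin l) (Fin m) ℝ) (hB : Function.Injective B.mulVec) :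
    (Matrix.fromBlocks G 0 0
      (Matrix.fromBlocks ((β / α) • (Bᵀ * B)) (((1 - α) / α) • Bᵀ)
        (((1 - α) / α) • B) ((1 / (α * β)) • (1 : Matrix (Fin l) (Fin l) ℝ)))).PosDef := by
  obtain ⟨hα0, hα2⟩ := hα
  have hαβ : 0 < α * β := mul_pos hα0 hβ
  have hBtB : (Bᵀ * B).PosDef := aux_transpose_mul_self_posDef B hB
  -- D block
  have hD : ((1 / (α * β)) • (1 : Matrix (Fin l) (Fin l) ℝ)).PosDef :=
    aux_smul_posDef Matrix.PosDef.one (by positivity)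
  -- D⁻¹
  have hDinv : ((1 / (α * β)) • (1 : Matrix (Fin l) (Fin l) ℝ))⁻¹
      = (α * β) • (1 : Matrix (Fin l) (Fin l) ℝ) := by
    apply Matrix.inv_eq_right_inv
    rw [Matrix.smul_mul, Matrix.mul_smul, Matrix.mul_one, smul_smul]
    rw [one_div, inv_mul_cancel₀ hαβ.ne']
    simp
  -- conjTranspose of the off-diagonal block
  have hconj : (((1 - α) / α) • Bᵀ)ᴴ = ((1 - α) / α) • B := by
    simp [Matrix.conjTranspose]
    ext i j
    simp [Matrix.transpose_apply]
  -- Schur complement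
  have hschur : ((β / α) • (Bᵀ * B)
      - (((1 - α) / α) • Bᵀ) * ((1 / (α * β)) • (1 : Matrix (Fin l) (Fin l) ℝ))⁻¹
        * ((((1 - α) / α) • Bᵀ)ᴴ))
      = (β * (2 - α)) • (Bᵀ * B) := by
    rw [hDinv, hconj]
    simp only [Matrix.smul_mul, Matrix.mul_smul, Matrix.mul_one, smul_smul]
    rw [← sub_smul]
    congr 1
    field_simp
    ring
  have hSpos : ((β / α) • (Bᵀ * B)
      - (((1 - α) / α) • Bᵀ) * ((1 / (α * β)) • (1 : Matrix (Fin l) (Fin l) ℝ))⁻¹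
        * ((((1 - α) / α) • Bᵀ)ᴴ)).PosDef := by
    rw [hschur]
    exact aux_smul_posDef hBtB (by nlinarith)
  have hM2 : (Matrix.fromBlocks ((β / α) • (Bᵀ * B)) (((1 - α) / α) • Bᵀ)
        (((1 - α) / α) • B) ((1 / (α * β)) • (1 : Matrix (Fin l) (Fin l) ℝ))).PosDef := by
    have := aux_fromBlocks_schur₂₂ (((1 - α) / α) • Bᵀ) hD hSpos
    rwa [hconj] at this
  exact aux_fromBlocks_diag hG hM2
end

section
/- Let α ∈ (0,2), β > 0, and let G₁ ∈ ℝ^{n×n}, G₂ ∈ ℝ^{m×m} be symmetric positive definite. For any matrix B ∈ ℝ^{ℓ×m}, the block matrix H_α = [[G₁,0,0],[0,(β/α)BᵀB + G₂,((1-α)/α)Bᵀ],[0,((1-α)/α)B,(1/(αβ))I_ℓ]] is symmetric positive definite. -/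
open Matrix

private lemma dp_self_nonneg {k : ℕ} (v : Fin k → ℝ) : 0 ≤ v ⬝ᵥ v :=
  Finset.sum_nonneg fun i _ => mul_self_nonneg (v i)

theorem H_alpha_posDef
    (n m l : ℕ) (α β : ℝ) (hα : α ∈ Set.Ioo (0:ℝ) 2) (hβ : 0 < β)
    (G₁ : Matrix (Fin n) (Fin n) ℝ) (hG₁ : G₁.PosDef)
    (G₂ : Matrix (Fin m) (Fin m) ℝ) (hG₂ : G₂.PosDef)
    (B : Matrix (Fin l) (Fin m) ℝ) :
    (Matrix.fromBlocks G₁ 0 0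
      (Matrix.fromBlocks ((β / α) • (Bᵀ * B) + G₂) (((1 - α) / α) • Bᵀ)
        (((1 - α) / α) • B) ((1 / (α * β)) • (1 : Matrix (Fin l) (Fin l) ℝ)))).PosDef := by
  obtain ⟨hα0, hα2⟩ := hα
  have hαβ : 0 < α * β := mul_pos hα0 hβ
  set a : ℝ := β / α with ha_def
  set c : ℝ := (1 - α) / α with hc_def
  set d : ℝ := 1 / (α * β) with hd_def
  have ha : 0 < a := div_pos hβ hα0
  have hd : 0 < d := by positivity
  have herm : ∀ (M : Matrix (Fin l) (Fin m) ℝ), (M : Matrix (Fin l) (Fin m) ℝ)ᴴ = Mᵀ := by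
    intro M; ext i j; simp
  have hBH : Bᴴ = Bᵀ := herm B
  have hBtB : ((Bᵀ * B) : Matrix (Fin m) (Fin m) ℝ).IsHermitian := by
    have h := Matrix.isHermitian_conjTranspose_mul_self B
    rwa [hBH] at h
  rw [posDef_iff_dotProduct_mulVec]
  constructor
  · rw [isHermitian_fromBlocks_iff]
    refine ⟨hG₁.1, by simp, by simp, ?_⟩
    rw [isHermitian_fromBlocks_iff]
    refine ⟨?_, ?_, ?_, ?_⟩
    · show ((β / α) • (Bᵀ * B) + G₂)ᴴ = (β / α) • (Bᵀ * B) + G₂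
      rw [conjTranspose_add, conjTranspose_smul, star_trivial, hBtB.eq, hG₂.1.eq]
    · show (((1 - α) / α) • Bᵀ)ᴴ = ((1 - α) / α) • B
      ext i j; simp [conjTranspose_apply]
    · show (((1 - α) / α) • B)ᴴ = ((1 - α) / α) • Bᵀ
      ext i j; simp [conjTranspose_apply]
    · show ((1 / (α * β)) • (1 : Matrix (Fin l) (Fin l) ℝ))ᴴ = _
      rw [conjTranspose_smul, star_trivial, Matrix.isHermitian_one.eq]
  · intro z hz
    set x : Fin n → ℝ := z ∘ Sum.inl with hx_def
    set y : Fin m → ℝ := z ∘ Sum.inr ∘ Sum.inl with hy_def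
    set lam : Fin l → ℝ := z ∘ Sum.inr ∘ Sum.inr with hlam_def
    have hzeq : z = Sum.elim x (Sum.elim y lam) := by
      funext i
      rcases i with i | i
      · rfl
      · rcases i with i | i <;> rfl
    set u : Fin l → ℝ := B *ᵥ y with hu_def
    have hexpand : star z ⬝ᵥ ((Matrix.fromBlocks G₁ 0 0
        (Matrix.fromBlocks (a • (Bᵀ * B) + G₂) (c • Bᵀ)
          (c • B) (d • (1 : Matrix (Fin l) (Fin l) ℝ)))) *ᵥ z)
        = x ⬝ᵥ (G₁ *ᵥ x) + (y ⬝ᵥ (G₂ *ᵥ y) + (a * (u ⬝ᵥ u) + 2 * c * (u ⬝ᵥ lam) + d * (lam ⬝ᵥ lam))) := by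
      rw [hzeq]
      simp only [star_trivial, fromBlocks_mulVec, sumElim_dotProduct_sumElim,
        zero_mulVec, add_zero, zero_add, add_mulVec, smul_mulVec,
        dotProduct_add, dotProduct_smul, smul_eq_mul, one_mulVec]
      simp only [Sum.elim_comp_inl, Sum.elim_comp_inr]
      have h1 : (Bᵀ * B) *ᵥ y = Bᵀ *ᵥ u := by rw [hu_def, mulVec_mulVec]
      have h2 : y ⬝ᵥ (Bᵀ *ᵥ u) = u ⬝ᵥ u := by
        rw [dotProduct_mulVec, vecMul_transpose, ← hu_def]
      have h3 : y ⬝ᵥ (Bᵀ *ᵥ lam) = u ⬝ᵥ lam := by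
        rw [dotProduct_mulVec, vecMul_transpose, ← hu_def]
      have h4 : lam ⬝ᵥ (B *ᵥ y) = u ⬝ᵥ lam := by
        rw [← hu_def]; exact dotProduct_comm _ _
      rw [h1, h2, h3, h4]
      ring
    rw [hexpand]
    -- key quadratic inequality
    have hsq : 0 ≤ (a • u + c • lam) ⬝ᵥ (a • u + c • lam) := dp_self_nonneg _
    have hsq' : (a • u + c • lam) ⬝ᵥ (a • u + c • lam)
        = a^2 * (u ⬝ᵥ u) + 2 * (a * c) * (u ⬝ᵥ lam) + c^2 * (lam ⬝ᵥ lam) := by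
      simp only [dotProduct_add, add_dotProduct, smul_dotProduct, dotProduct_smul, smul_eq_mul]
      rw [dotProduct_comm lam u]
      ring
    have hce : c^2 / a < d := by
      rw [hc_def, ha_def, hd_def]
      rw [div_lt_div_iff₀ (by positivity) (by positivity)]
      have : ((1 - α) / α)^2 * (α * β) = (1-α)^2 * (β / α) := by
        field_simp
      rw [this]
      have h1 : (1 - α)^2 < 1 := by nlinarith
      nlinarith [div_pos hβ hα0]
    have hL : 0 ≤ lam ⬝ᵥ lam := dp_self_nonneg lam
    have hkey : (d - c^2/a) * (lam ⬝ᵥ lam) ≤ a * (u ⬝ᵥ u) + 2 * c * (u ⬝ᵥ lam) + d * (lam ⬝ᵥ lam) := by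
      have := hsq
      rw [hsq'] at this
      have ha' := ha.ne'
      have expand : a * (a * (u ⬝ᵥ u) + 2 * c * (u ⬝ᵥ lam) + (c^2/a) * (lam ⬝ᵥ lam))
          = a^2 * (u ⬝ᵥ u) + 2 * (a * c) * (u ⬝ᵥ lam) + c^2 * (lam ⬝ᵥ lam) := by
        field_simp
      nlinarith
    have hquad_nonneg : 0 ≤ a * (u ⬝ᵥ u) + 2 * c * (u ⬝ᵥ lam) + d * (lam ⬝ᵥ lam) := by
      have : 0 ≤ (d - c^2/a) * (lam ⬝ᵥ lam) := mul_nonneg (by linarith) hL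
      linarith
    have ht1 : 0 ≤ x ⬝ᵥ (G₁ *ᵥ x) := by
      have := hG₁.posSemidef.dotProduct_mulVec_nonneg x; simpa using this
    have ht2 : 0 ≤ y ⬝ᵥ (G₂ *ᵥ y) := by
      have := hG₂.posSemidef.dotProduct_mulVec_nonneg y; simpa using this
    by_cases hxz : x = 0
    · by_cases hyz : y = 0
      · have hlz : lam ≠ 0 := by
          intro hl
          apply hz
          rw [hzeq, hxz, hyz, hl]
          funext i; rcases i with i | i; · rfl
          · rcases i with i | i <;> rfl
        have hLpos : 0 < lam ⬝ᵥ lam :=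
          lt_of_le_of_ne hL (fun h => hlz (dotProduct_self_eq_zero.mp h.symm))
        have : 0 < (d - c^2/a) * (lam ⬝ᵥ lam) := mul_pos (by linarith) hLpos
        linarith
      · have : 0 < y ⬝ᵥ (G₂ *ᵥ y) := by
          have := hG₂.dotProduct_mulVec_pos hyz; simpa using this
        linarith
    · have : 0 < x ⬝ᵥ (G₁ *ᵥ x) := by
        have := hG₁.dotProduct_mulVec_pos hxz; simpa using this
      linarith
end

section
/- Let γ > 0 and define e_Λ(λ,γ) = γ(Ax + By − b) for a point u = (x,y,λ). In the P-GADMM scheme with update λ^{k+1} = λᵏ − β(α A x^{k+1} + (1−α)(b − B yᵏ) + B y^{k+1} − b), we have dist²(0, e_Λ(λ^{k+1},1)) ≤ (2/(α²β²))‖λ^{k+1}−λᵏ‖² + (2(1−α)²/α²)‖B y^{k+1} − B yᵏ‖². -/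
open Matrix

/-- Euclidean norm of a vector in `Fin k → ℝ`. -/
noncomputable def en {k : ℕ} (v : Fin k → ℝ) : ℝ := Real.sqrt (∑ i, v i ^ 2)

lemma en_sq {k : ℕ} (v : Fin k → ℝ) : en v ^ 2 = ∑ i, v i ^ 2 := by
  have : (0:ℝ) ≤ ∑ i, v i ^ 2 := Finset.sum_nonneg fun i _ => sq_nonneg _
  rw [en, Real.sq_sqrt this]

theorem dual_residual_sq_bound
    (n m l : ℕ) (α β : ℝ) (hα : α ∈ Set.Ioo (0:ℝ) 2) (hβ : 0 < β)
    (A : Matrix (Fin l) (Fin n) ℝ) (B : Matrix (Fin l) (Fin m) ℝ) (b : Fin l → ℝ)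
    (x1 : Fin n → ℝ) (y0 y1 : Fin m → ℝ) (l0 l1 : Fin l → ℝ)
    (hupd : l1 = l0 - β • (α • A.mulVec x1 + (1 - α) • (b - B.mulVec y0)
              + B.mulVec y1 - b)) :
    en ((1:ℝ) • (A.mulVec x1 + B.mulVec y1 - b)) ^ 2
      ≤ (2 / (α ^ 2 * β ^ 2)) * en (l1 - l0) ^ 2
        + (2 * (1 - α) ^ 2 / α ^ 2) * en (B.mulVec y1 - B.mulVec y0) ^ 2 := by
  obtain ⟨hα0, _⟩ := hα
  have hβ0 : β ≠ 0 := ne_of_gt hβ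
  have hαne : α ≠ 0 := ne_of_gt hα0
  rw [one_smul, en_sq, en_sq, en_sq]
  have key : ∀ i, (A.mulVec x1 + B.mulVec y1 - b) i ^ 2
      ≤ 2 / (α ^ 2 * β ^ 2) * (l1 - l0) i ^ 2
        + 2 * (1 - α) ^ 2 / α ^ 2 * (B.mulVec y1 - B.mulVec y0) i ^ 2 := by
    intro i
    have h := congrFun hupd i
    simp only [Pi.sub_apply, Pi.add_apply, Pi.smul_apply, smul_eq_mul] at h ⊢
    set P := A.mulVec x1 i
    set Q := B.mulVec y1 i
    set R := B.mulVec y0 i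
    rw [div_mul_eq_mul_div, div_mul_eq_mul_div,
      div_add_div _ _ (by positivity) (by positivity), le_div_iff₀ (by positivity)]
    have hs : l1 i - l0 i = -(β * (α * (P + Q - b i) + (1 - α) * (Q - R))) := by
      rw [h]; ring
    rw [hs]
    nlinarith [sq_nonneg (α * β * (α * (P + Q - b i) + 2 * (1 - α) * (Q - R)))]
  calc ∑ i, (A.mulVec x1 + B.mulVec y1 - b) i ^ 2
      ≤ ∑ i, (2 / (α ^ 2 * β ^ 2) * (l1 - l0) i ^ 2
        + 2 * (1 - α) ^ 2 / α ^ 2 * (B.mulVec y1 - B.mulVec y0) i ^ 2) :=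
        Finset.sum_le_sum fun i _ => key i
    _ = _ := by rw [Finset.sum_add_distrib, ← Finset.mul_sum, ← Finset.mul_sum]
end

section
/- Let Γ₀ = diag(G₁, G₂, ((2−α)/β)I_ℓ) with G₁, G₂ symmetric positive definite, α ∈ (0,2), β > 0, and suppose the DP-GADMM dual identity λᵏ − λ^{k+1} = α(λᵏ − λ̄ᵏ) − βB(yᵏ − ȳᵏ) holds with x^{k+1} = x̄ᵏ and y^{k+1} = ȳᵏ. Then ‖uᵏ − u^{k+1}‖²_{H₀} ≤ max{1 + 2β(2−α)‖B‖²/λ_min(G₂), 2α²} · ‖uᵏ − ūᵏ‖²_{H₀}, where H₀ = diag(G₁, G₂, ((2−α)/β)I_ℓ), uᵏ = (xᵏ,yᵏ,λᵏ), u^{k+1} = (x^{k+1},y^{k+1},λ^{k+1}), ūᵏ = (x̄ᵏ,ȳᵏ,λ̄ᵏ). -/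
open Matrix

/-- The spectral (Euclidean operator) norm of a real matrix. -/
noncomputable def specNorm {l m : ℕ} (B : Matrix (Fin l) (Fin m) ℝ) : ℝ :=
  sSup ((fun y => en (B.mulVec y)) '' {y | en y ≤ 1})

lemma en_nonneg {k : ℕ} (v : Fin k → ℝ) : 0 ≤ en v := Real.sqrt_nonneg _

lemma en_smul {k : ℕ} (a : ℝ) (v : Fin k → ℝ) : en (a • v) = |a| * en v := by
  unfold en
  rw [← Real.sqrt_sq_eq_abs, ← Real.sqrt_mul (sq_nonneg a), Finset.mul_sum]
  congr 1; apply Finset.sum_congr rfl; intro i _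
  simp [mul_pow]

lemma bdd_spec {l m : ℕ} (B : Matrix (Fin l) (Fin m) ℝ) :
    BddAbove ((fun y => en (B.mulVec y)) '' {y | en y ≤ 1}) := by
  refine ⟨Real.sqrt (∑ i, ∑ j, B i j ^ 2), ?_⟩
  rintro _ ⟨y, hy, rfl⟩
  have hy1 : en y ≤ 1 := hy
  have hy' : ∑ j, y j ^ 2 ≤ 1 := by nlinarith [en_sq y, en_nonneg y]
  apply Real.sqrt_le_sqrt
  have h1 : ∀ i, (B.mulVec y i) ^ 2 ≤ ∑ j, B i j ^ 2 := by
    intro i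
    have := Finset.sum_mul_sq_le_sq_mul_sq Finset.univ (fun j => B i j) y
    have hnn : (0:ℝ) ≤ ∑ j, B i j ^ 2 := Finset.sum_nonneg fun _ _ => sq_nonneg _
    calc (B.mulVec y i) ^ 2 = (∑ j, B i j * y j) ^ 2 := by rfl
    _ ≤ (∑ j, B i j ^ 2) * ∑ j, y j ^ 2 := this
    _ ≤ (∑ j, B i j ^ 2) * 1 := by exact mul_le_mul_of_nonneg_left hy' hnn
    _ = _ := mul_one _
  exact Finset.sum_le_sum fun i _ => h1 i

lemma specNorm_nonneg {l m : ℕ} (B : Matrix (Fin l) (Fin m) ℝ) : 0 ≤ specNorm B := by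
  have : (0:ℝ) ∈ (fun y => en (B.mulVec y)) '' {y | en y ≤ 1} := by
    refine ⟨0, by simp [Set.mem_setOf_eq, en], ?_⟩
    simp [en]
  exact le_csSup (bdd_spec B) this

lemma en_mulVec_le {l m : ℕ} (B : Matrix (Fin l) (Fin m) ℝ) (y : Fin m → ℝ) :
    en (B.mulVec y) ≤ specNorm B * en y := by
  rcases eq_or_lt_of_le (en_nonneg y) with h0 | hpos
  · have hs : ∑ j, y j ^ 2 = 0 := by
      have := en_sq y; rw [← h0] at this; simpa using this.symm
    have hy0 : y = 0 := by
      funext j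
      have := (Finset.sum_eq_zero_iff_of_nonneg (fun i _ => sq_nonneg (y i))).mp hs j
        (Finset.mem_univ j)
      exact pow_eq_zero_iff (n := 2) (by norm_num) |>.mp this
    subst hy0
    simp [en, Matrix.mulVec_zero]
  · set c := en y with hc
    have hmem : en (B.mulVec (c⁻¹ • y)) ∈ (fun y => en (B.mulVec y)) '' {y | en y ≤ 1} := by
      refine ⟨c⁻¹ • y, ?_, rfl⟩
      simp only [Set.mem_setOf_eq, en_smul, abs_inv, abs_of_pos hpos]
      rw [inv_mul_cancel₀ (ne_of_gt hpos)]
    have hle := le_csSup (bdd_spec B) hmem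
    rw [Matrix.mulVec_smul, en_smul, abs_inv, abs_of_pos hpos] at hle
    have := mul_le_mul_of_nonneg_left hle (le_of_lt hpos)
    rw [← mul_assoc, mul_inv_cancel₀ (ne_of_gt hpos), one_mul] at this
    calc en (B.mulVec y) ≤ c * specNorm B := this
    _ = specNorm B * c := mul_comm _ _

lemma rayleigh {m : ℕ} (A : Matrix (Fin m) (Fin m) ℝ) (hA : A.IsHermitian) (x : Fin m → ℝ) :
    (⨅ i, hA.eigenvalues i) * (x ⬝ᵥ x) ≤ x ⬝ᵥ A.mulVec x := by
  set U : Matrix (Fin m) (Fin m) ℝ := (hA.eigenvectorUnitary : Matrix (Fin m) (Fin m) ℝ) with hU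
  set z : Fin m → ℝ := (star U) *ᵥ x with hz
  have hUU : U * star U = 1 := (Matrix.mem_unitaryGroup_iff).mp hA.eigenvectorUnitary.2
  have hxx : x ⬝ᵥ x = ∑ i, z i ^ 2 := by
    have hsU : star U = Uᵀ := by
      rw [Matrix.star_eq_conjTranspose, Matrix.conjTranspose_eq_transpose_of_trivial]
    have : z ⬝ᵥ z = x ⬝ᵥ x := by
      conv_lhs => rw [hz, Matrix.dotProduct_mulVec, hsU, Matrix.vecMul_transpose,
        Matrix.mulVec_mulVec, ← hsU, hUU, Matrix.one_mulVec]
    rw [← this]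
    simp [dotProduct, sq]
  have hAx : x ⬝ᵥ A.mulVec x = ∑ i, hA.eigenvalues i * z i ^ 2 := by
    have hsU : star U = Uᵀ := by
      rw [Matrix.star_eq_conjTranspose, Matrix.conjTranspose_eq_transpose_of_trivial]
    have step : x ⬝ᵥ A.mulVec x = z ⬝ᵥ (Matrix.diagonal (RCLike.ofReal ∘ hA.eigenvalues)).mulVec z := by
      conv_lhs => rw [hA.spectral_theorem, Unitary.conjStarAlgAut_apply]
      rw [← Matrix.mulVec_mulVec, ← Matrix.mulVec_mulVec, Matrix.dotProduct_mulVec x,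
        ← Matrix.mulVec_transpose, ← hsU, ← hz]
    rw [step, hz]
    simp [Matrix.mulVec_diagonal, dotProduct, sq]
    ring_nf
    apply Finset.sum_congr rfl
    intro i _
    ring
  rw [hxx, hAx, Finset.mul_sum]
  apply Finset.sum_le_sum
  intro i _
  have h1 : (⨅ j, hA.eigenvalues j) ≤ hA.eigenvalues i := ciInf_le (Finite.bddBelow_range _) i
  exact mul_le_mul_of_nonneg_right h1 (sq_nonneg _)

theorem dp_gadmm_key_estimate
    (n m l : ℕ) (α β : ℝ) (hα : α ∈ Set.Ioo (0:ℝ) 2) (hβ : 0 < β)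
    (G₁ : Matrix (Fin n) (Fin n) ℝ) (hG₁ : G₁.PosDef)
    (G₂ : Matrix (Fin m) (Fin m) ℝ) (hG₂ : G₂.PosDef)
    (lmin : ℝ) (hlmin : lmin = ⨅ i, hG₂.1.eigenvalues i) (hlmin_pos : 0 < lmin)
    (B : Matrix (Fin l) (Fin m) ℝ)
    (x0 x1 xb : Fin n → ℝ) (y0 y1 yb : Fin m → ℝ) (l0 l1 lb : Fin l → ℝ)
    (hid : l0 - l1 = α • (l0 - lb) - β • B.mulVec (y0 - yb))
    (hx : x1 = xb) (hy : y1 = yb) :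
    (x0 - x1) ⬝ᵥ G₁.mulVec (x0 - x1) + (y0 - y1) ⬝ᵥ G₂.mulVec (y0 - y1)
        + ((2 - α) / β) * en (l0 - l1) ^ 2
      ≤ max (1 + 2 * β * (2 - α) * specNorm B ^ 2 / lmin) (2 * α ^ 2) *
        ((x0 - xb) ⬝ᵥ G₁.mulVec (x0 - xb) + (y0 - yb) ⬝ᵥ G₂.mulVec (y0 - yb)
          + ((2 - α) / β) * en (l0 - lb) ^ 2) := by
  subst hx hy
  obtain ⟨hα0, hα2⟩ := hα
  set dx := x0 - x1
  set dy := y0 - y1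
  set dl := l0 - lb
  set A := dx ⬝ᵥ G₁.mulVec dx with hA
  set C := dy ⬝ᵥ G₂.mulVec dy with hC
  set Sl := en dl ^ 2 with hSl
  set Sy := ∑ j, dy j ^ 2 with hSy
  set SB := specNorm B with hSB
  set M := max (1 + 2 * β * (2 - α) * SB ^ 2 / lmin) (2 * α ^ 2) with hM
  -- nonnegativity
  have hA0 : 0 ≤ A := by
    have := hG₁.posSemidef.dotProduct_mulVec_nonneg dx
    simpa using this
  have hC0 : 0 ≤ C := by
    have := hG₂.posSemidef.dotProduct_mulVec_nonneg dy
    simpa using this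
  have hSl0 : 0 ≤ Sl := sq_nonneg _
  have hSy0 : 0 ≤ Sy := Finset.sum_nonneg fun _ _ => sq_nonneg _
  have hSB0 : 0 ≤ SB := specNorm_nonneg B
  -- Rayleigh: lmin * Sy ≤ C
  have hray : lmin * Sy ≤ C := by
    have := rayleigh G₂ hG₂.1 dy
    rw [← hlmin] at this
    have hdd : dy ⬝ᵥ dy = Sy := by simp [hSy, dotProduct, sq]
    rw [hdd] at this
    exact this
  -- bound on ‖B dy‖²
  have hBdy : en (B.mulVec dy) ^ 2 ≤ SB ^ 2 * Sy := by
    have h1 := en_mulVec_le B dy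
    have h2 : en dy ^ 2 = Sy := en_sq dy
    nlinarith [en_nonneg (B.mulVec dy), en_nonneg dy, mul_nonneg hSB0 (en_nonneg dy)]
  -- bound on en(l0-l1)²
  have hlam : en (l0 - l1) ^ 2 ≤ 2 * α ^ 2 * Sl + 2 * β ^ 2 * (SB ^ 2 * Sy) := by
    rw [hid, en_sq]
    have pt : ∀ i, (α • dl - β • B.mulVec dy) i ^ 2
        ≤ 2 * α ^ 2 * dl i ^ 2 + 2 * β ^ 2 * (B.mulVec dy) i ^ 2 := by
      intro i
      simp only [Pi.sub_apply, Pi.smul_apply, smul_eq_mul]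
      nlinarith [sq_nonneg (α * dl i + β * (B.mulVec dy) i)]
    calc ∑ i, (α • dl - β • B.mulVec dy) i ^ 2
        ≤ ∑ i, (2 * α ^ 2 * dl i ^ 2 + 2 * β ^ 2 * (B.mulVec dy) i ^ 2) :=
          Finset.sum_le_sum fun i _ => pt i
      _ = 2 * α ^ 2 * (∑ i, dl i ^ 2) + 2 * β ^ 2 * ∑ i, (B.mulVec dy) i ^ 2 := by
          rw [Finset.sum_add_distrib, ← Finset.mul_sum, ← Finset.mul_sum]
      _ ≤ 2 * α ^ 2 * Sl + 2 * β ^ 2 * (SB ^ 2 * Sy) := by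
          have e1 : ∑ i, dl i ^ 2 = Sl := (en_sq dl).symm
          have e2 : ∑ i, (B.mulVec dy) i ^ 2 = en (B.mulVec dy) ^ 2 := (en_sq _).symm
          rw [e1, e2]
          nlinarith [hBdy]
  -- M bounds
  have hM1 : 1 + 2 * β * (2 - α) * SB ^ 2 / lmin ≤ M := le_max_left _ _
  have hM2 : 2 * α ^ 2 ≤ M := le_max_right _ _
  have hM3 : (1:ℝ) ≤ M := by
    have : 0 ≤ 2 * β * (2 - α) * SB ^ 2 / lmin :=
      div_nonneg (mul_nonneg (by nlinarith) (sq_nonneg SB)) (le_of_lt hlmin_pos)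
    linarith
  have hcoef : (2 - α) / β > 0 := div_pos (by linarith) hβ
  -- key chain
  have key : ((2 - α) / β) * en (l0 - l1) ^ 2
      ≤ 2 * α ^ 2 * (((2 - α) / β) * Sl) + 2 * β * (2 - α) * SB ^ 2 * Sy := by
    have h1 : ((2 - α) / β) * en (l0 - l1) ^ 2
        ≤ ((2 - α) / β) * (2 * α ^ 2 * Sl + 2 * β ^ 2 * (SB ^ 2 * Sy)) :=
      mul_le_mul_of_nonneg_left hlam (le_of_lt hcoef)
    have h2 : ((2 - α) / β) * (2 * β ^ 2 * (SB ^ 2 * Sy)) = 2 * β * (2 - α) * SB ^ 2 * Sy := by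
      field_simp
    calc ((2 - α) / β) * en (l0 - l1) ^ 2
        ≤ ((2 - α) / β) * (2 * α ^ 2 * Sl) + ((2 - α) / β) * (2 * β ^ 2 * (SB ^ 2 * Sy)) := by
          rw [← mul_add]; exact h1
      _ = 2 * α ^ 2 * (((2 - α) / β) * Sl) + 2 * β * (2 - α) * SB ^ 2 * Sy := by
          rw [h2]; ring
  have hSyC : 2 * β * (2 - α) * SB ^ 2 * Sy ≤ (2 * β * (2 - α) * SB ^ 2 / lmin) * C := by
    rw [div_mul_eq_mul_div, le_div_iff₀ hlmin_pos]
    have hnn : 0 ≤ 2 * β * (2 - α) * SB ^ 2 := mul_nonneg (by nlinarith) (sq_nonneg SB)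
    calc 2 * β * (2 - α) * SB ^ 2 * Sy * lmin = (2 * β * (2 - α) * SB ^ 2) * (lmin * Sy) := by ring
      _ ≤ (2 * β * (2 - α) * SB ^ 2) * C := mul_le_mul_of_nonneg_left hray hnn
  have hSlM : 2 * α ^ 2 * (((2 - α) / β) * Sl) ≤ M * (((2 - α) / β) * Sl) :=
    mul_le_mul_of_nonneg_right hM2 (mul_nonneg (le_of_lt hcoef) hSl0)
  have hMA : A ≤ M * A := by
    calc A = 1 * A := (one_mul A).symm
    _ ≤ M * A := mul_le_mul_of_nonneg_right hM3 hA0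
  have hMC : (1 + 2 * β * (2 - α) * SB ^ 2 / lmin) * C ≤ M * C :=
    mul_le_mul_of_nonneg_right hM1 hC0
  have hexp1 : (1 + 2 * β * (2 - α) * SB ^ 2 / lmin) * C
      = C + (2 * β * (2 - α) * SB ^ 2 / lmin) * C := by ring
  have hexp2 : M * (A + C + ((2 - α) / β) * Sl)
      = M * A + M * C + M * (((2 - α) / β) * Sl) := by ring
  linarith [key, hSyC, hSlM, hMA, hMC, hexp1, hexp2]
end

section
/- Let F: ℝⁿ ⇉ ℝᵐ be a set-valued map whose graph is the union of finitely many polyhedra (a piecewise linear multifunction), and suppose F⁻¹(0) ≠ ∅. Then for every bounded set U ⊆ ℝⁿ there exists ψ > 0 such that dist(u, F⁻¹(0)) ≤ ψ · dist(0, F(u)) for all u ∈ U with F(u) ≠ ∅. -/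
open Matrix

/-- Euclidean distance from a point to a set of vectors. -/
noncomputable def distE {k : ℕ} (u : Fin k → ℝ) (S : Set (Fin k → ℝ)) : ℝ :=
  sInf ((fun s => en (u - s)) '' S)

/-- A subset of `(Fin n → ℝ) × (Fin m → ℝ)` is a (convex) polyhedron:
a finite intersection of closed half-spaces. -/
def IsPolyhedron {n m : ℕ} (P : Set ((Fin n → ℝ) × (Fin m → ℝ))) : Prop :=
  ∃ (k : ℕ) (a : Fin k → (Fin n → ℝ) × (Fin m → ℝ)) (c : Fin k → ℝ),
    P = {z | ∀ i, (a i).1 ⬝ᵥ z.1 + (a i).2 ⬝ᵥ z.2 ≤ c i}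


section Aux
open Finset Set

/-- Conic Carathéodory: a nonnegative combination supported on `t` can be rewritten as a
nonnegative combination supported on a subset `s ⊆ t` with `(a i)_{i ∈ s}` linearly independent. -/
theorem conic_caratheodory {E : Type*} [AddCommGroup E] [Module ℝ E] {k : ℕ} (a : Fin k → E) :
    ∀ (t : Finset (Fin k)) (l : Fin k → ℝ), (∀ i, 0 ≤ l i) → (∀ i ∉ t, l i = 0) →
    ∃ s ⊆ t, ∃ mu : Fin k → ℝ, (∀ i, 0 ≤ mu i) ∧ (∀ i ∉ s, mu i = 0) ∧
      (∑ i, mu i • a i = ∑ i, l i • a i) ∧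
      LinearIndependent ℝ (fun i : s => a (i : Fin k)) := by
  intro t
  induction t using Finset.strongInductionOn with
  | _ t ih =>
    intro l hl0 hlt
    by_cases hind : LinearIndependent ℝ (fun i : t => a (i : Fin k))
    · exact ⟨t, le_refl t, l, hl0, hlt, rfl, hind⟩
    · rw [Fintype.not_linearIndependent_iff] at hind
      obtain ⟨g, hgsum, j, hgj⟩ := hind
      -- extend g to Fin k
      set G : Fin k → ℝ := fun i => if h : i ∈ t then g ⟨i, h⟩ else 0 with hG
      have hGt : ∀ i ∉ t, G i = 0 := fun i hi => by simp [hG, hi]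
      have hGsum : ∑ i, G i • a i = 0 := by
        rw [← Finset.sum_subset (Finset.subset_univ t)
          (fun i _ hi => by rw [hGt i hi, zero_smul])]
        rw [← Finset.sum_attach t fun i => G i • a i]
        simpa [hG] using hgsum
      have hGex : ∃ i ∈ t, G i ≠ 0 := ⟨j, j.2, by simpa [hG] using hgj⟩
      -- WLOG some positive coefficient; otherwise replace G by -G
      have main : ∀ G : Fin k → ℝ, (∀ i ∉ t, G i = 0) → (∑ i, G i • a i = 0) →
          (∃ i ∈ t, 0 < G i) →
          ∃ s ⊆ t, ∃ mu : Fin k → ℝ, (∀ i, 0 ≤ mu i) ∧ (∀ i ∉ s, mu i = 0) ∧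
            (∑ i, mu i • a i = ∑ i, l i • a i) ∧
            LinearIndependent ℝ (fun i : s => a (i : Fin k)) := by
        intro G hGt hGsum ⟨i₁, hi₁t, hi₁pos⟩
        -- the set of positive coefficients
        set J : Finset (Fin k) := t.filter (fun i => 0 < G i) with hJ
        have hJne : J.Nonempty := ⟨i₁, by simp [hJ, hi₁t, hi₁pos]⟩
        obtain ⟨i₀, hi₀J, hi₀min⟩ := J.exists_min_image (fun i => l i / G i) hJne
        have hi₀t : i₀ ∈ t := (Finset.mem_filter.1 hi₀J).1
        have hi₀pos : 0 < G i₀ := (Finset.mem_filter.1 hi₀J).2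
        set τ : ℝ := l i₀ / G i₀ with hτ
        have hτ0 : 0 ≤ τ := div_nonneg (hl0 i₀) hi₀pos.le
        set l' : Fin k → ℝ := fun i => l i - τ * G i with hl'
        have hl'0 : ∀ i, 0 ≤ l' i := by
          intro i
          by_cases hpos : 0 < G i
          · by_cases hit : i ∈ t
            · have hiJ : i ∈ J := Finset.mem_filter.2 ⟨hit, hpos⟩
              have := hi₀min i hiJ
              have h2 : τ * G i ≤ l i := by
                rw [hτ]
                calc l i₀ / G i₀ * G i ≤ l i / G i * G i := by
                      exact mul_le_mul_of_nonneg_right this hpos.le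
                  _ = l i := div_mul_cancel₀ _ hpos.ne'
              simpa [hl'] using sub_nonneg.2 h2
            · exact absurd (hGt i hit) hpos.ne'
          · push_neg at hpos
            have : τ * G i ≤ 0 := mul_nonpos_of_nonneg_of_nonpos hτ0 hpos
            simp only [hl']
            linarith [hl0 i]
        have hl'i₀ : l' i₀ = 0 := by
          simp [hl', hτ, div_mul_cancel₀ _ hi₀pos.ne']
        have hl't : ∀ i ∉ t.erase i₀, l' i = 0 := by
          intro i hi
          by_cases hit : i ∈ t
          · have : i = i₀ := by
              by_contra hne
              exact hi (Finset.mem_erase.2 ⟨hne, hit⟩)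
            rw [this]; exact hl'i₀
          · simp [hl', hlt i hit, hGt i hit]
        have hl'sum : ∑ i, l' i • a i = ∑ i, l i • a i := by
          simp only [hl', sub_smul, Finset.sum_sub_distrib, mul_smul]
          rw [← Finset.smul_sum, hGsum, smul_zero, sub_zero]
        obtain ⟨s, hs, mu, h1, h2, h3, h4⟩ :=
          ih (t.erase i₀) (Finset.erase_ssubset hi₀t) l' hl'0 hl't
        exact ⟨s, hs.trans (Finset.erase_subset i₀ t), mu, h1, h2, h3.trans hl'sum, h4⟩
      obtain ⟨i₁, hi₁t, hi₁⟩ := hGex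
      rcases hi₁.lt_or_gt with hneg | hpos
      · refine main (-G) (fun i hi => by simp [hGt i hi]) (by simpa using hGsum) ⟨i₁, hi₁t, by simpa using hneg⟩
      · exact main G hGt hGsum ⟨i₁, hi₁t, hpos⟩

section ConeLemmas
variable {k : ℕ} {E : Type*} [NormedAddCommGroup E] [InnerProductSpace ℝ E]
  [FiniteDimensional ℝ E]

/-- The convex cone generated by finitely many vectors, as a set. -/
def coneGen (a : Fin k → E) : Set E :=
  {x | ∃ l : Fin k → ℝ, (∀ i, 0 ≤ l i) ∧ x = ∑ i, l i • a i}

/-- The linear map sending coefficients supported on `s` to the combination. -/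
noncomputable def combMap (a : Fin k → E) (s : Finset (Fin k)) :
    ({ x // x ∈ s } → ℝ) →ₗ[ℝ] E where
  toFun mu := ∑ i : { x // x ∈ s }, mu i • a (i : Fin k)
  map_add' x y := by simp [add_smul, Finset.sum_add_distrib]
  map_smul' c x := by simp [Finset.smul_sum, mul_smul]

theorem combMap_inj {a : Fin k → E} {s : Finset (Fin k)}
    (h : LinearIndependent ℝ (fun i : s => a (i : Fin k))) :
    Function.Injective (combMap a s) := by
  rw [← LinearMap.ker_eq_bot, LinearMap.ker_eq_bot']
  intro mu hmu
  rw [Fintype.linearIndependent_iff] at h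
  funext i
  exact h mu hmu i

/-- For an independent support, the sum of coefficients is controlled by the norm of
the combination. -/
theorem exists_l1_bound (a : Fin k → E) (s : Finset (Fin k))
    (h : LinearIndependent ℝ (fun i : s => a (i : Fin k))) :
    ∃ C > (0:ℝ), ∀ mu : Fin k → ℝ, (∀ i ∉ s, mu i = 0) →
      ∑ i, |mu i| ≤ C * ‖∑ i, mu i • a i‖ := by
  set L := combMap a s
  have hinj := combMap_inj h
  set e := LinearEquiv.ofInjective L hinj
  have hcont : Continuous e.symm.toLinearMap := e.symm.toLinearMap.continuous_of_finiteDimensional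
  set f := LinearMap.toContinuousLinearMap e.symm.toLinearMap
  refine ⟨(s.card + 1) * (‖f‖ + 1), by positivity, fun mu hmu => ?_⟩
  set ν : { x // x ∈ s } → ℝ := fun i => mu (i : Fin k)
  have h1 : ∑ i : Fin k, mu i • a i = ∑ i ∈ s, mu i • a i :=
    (Finset.sum_subset (Finset.subset_univ s)
      (fun i _ hi => by rw [hmu i hi, zero_smul])).symm
  have hLν : L ν = ∑ i, mu i • a i := by
    show ∑ i : { x // x ∈ s }, ν i • a (i : Fin k) = _
    rw [h1, Finset.sum_coe_sort s (fun i => mu i • a i)]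
  have hν : ν = f ⟨L ν, LinearMap.mem_range_self L ν⟩ := by
    have : (⟨L ν, LinearMap.mem_range_self L ν⟩ : LinearMap.range L) = e ν := by
      exact Subtype.ext (LinearEquiv.ofInjective_apply L ν).symm
    show ν = e.symm _
    rw [this, LinearEquiv.symm_apply_apply]
  have hbound : ‖ν‖ ≤ ‖f‖ * ‖L ν‖ := by
    calc ‖ν‖ = ‖f ⟨L ν, LinearMap.mem_range_self L ν⟩‖ := by rw [← hν]
      _ ≤ ‖f‖ * ‖(⟨L ν, LinearMap.mem_range_self L ν⟩ : LinearMap.range L)‖ := f.le_opNorm _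
      _ = ‖f‖ * ‖L ν‖ := rfl
  have h2 : ∑ i, |mu i| = ∑ i : { x // x ∈ s }, |ν i| := by
    rw [← Finset.sum_subset (Finset.subset_univ s) (fun i _ hi => by rw [hmu i hi, abs_zero]),
      ← Finset.sum_coe_sort s (fun i => |mu i|)]
  have h3 : ∑ i : { x // x ∈ s }, |ν i| ≤ (s.card : ℝ) * ‖ν‖ := by
    have : ∀ i : { x // x ∈ s }, |ν i| ≤ ‖ν‖ := fun i => by
      simpa [Real.norm_eq_abs] using norm_le_pi_norm ν i
    calc ∑ i : { x // x ∈ s }, |ν i| ≤ ∑ _i : { x // x ∈ s }, ‖ν‖ :=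
          Finset.sum_le_sum (fun i _ => this i)
      _ = (s.card : ℝ) * ‖ν‖ := by simp [mul_comm]
  calc ∑ i, |mu i| ≤ (s.card : ℝ) * ‖ν‖ := h2 ▸ h3
    _ ≤ (s.card : ℝ) * (‖f‖ * ‖L ν‖) := by
        apply mul_le_mul_of_nonneg_left hbound (by positivity)
    _ ≤ ((s.card : ℝ) + 1) * ((‖f‖ + 1) * ‖L ν‖) := by
        have h0 : (0:ℝ) ≤ ‖L ν‖ := norm_nonneg _
        nlinarith [norm_nonneg f, Nat.cast_nonneg (α := ℝ) s.card]
    _ = ((s.card : ℝ) + 1) * (‖f‖ + 1) * ‖∑ i, mu i • a i‖ := by rw [hLν]; ring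

/-- A finitely generated cone is closed. -/
theorem coneGen_isClosed (a : Fin k → E) : IsClosed (coneGen a) := by
  classical
  have hdecomp : coneGen a = ⋃ s : Finset (Fin k),
      (if LinearIndependent ℝ (fun i : s => a (i : Fin k)) then
        (combMap a s) '' {mu | ∀ i, 0 ≤ mu i} else ∅) := by
    apply Set.Subset.antisymm
    · rintro x ⟨l, hl0, rfl⟩
      obtain ⟨s, -, mu, hmu0, hmus, hsum, hind⟩ :=
        conic_caratheodory a Finset.univ l hl0 (fun i hi => absurd (Finset.mem_univ i) hi)
      refine Set.mem_iUnion.2 ⟨s, ?_⟩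
      rw [if_pos hind]
      refine ⟨fun i => mu (i : Fin k), fun i => hmu0 i, ?_⟩
      show ∑ i : { x // x ∈ s }, mu (i : Fin k) • a (i : Fin k) = _
      rw [Finset.sum_coe_sort s (fun i => mu i • a i),
        Finset.sum_subset (Finset.subset_univ s) (fun i _ hi => by rw [hmus i hi, zero_smul]),
        hsum]
    · refine Set.iUnion_subset fun s => ?_
      split_ifs with hind
      · rintro x ⟨mu, hmu0, rfl⟩
        refine ⟨fun i => if h : i ∈ s then mu ⟨i, h⟩ else 0, fun i => ?_, ?_⟩
        · dsimp only; split_ifs with h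
          · exact hmu0 _
          · exact le_refl 0
        · show combMap a s mu = _
          show ∑ i : { x // x ∈ s }, mu i • a (i : Fin k) = _
          rw [← Finset.sum_subset (Finset.subset_univ s)
            (fun i _ hi => by
              show (if h : i ∈ s then mu ⟨i, h⟩ else 0) • a i = 0
              rw [dif_neg hi, zero_smul])]
          rw [← Finset.sum_coe_sort s (fun i => (if h : i ∈ s then mu ⟨i, h⟩ else 0) • a i)]
          refine Finset.sum_congr rfl fun i _ => ?_
          have hh : (if h : (i : Fin k) ∈ s then mu ⟨(i : Fin k), h⟩ else 0) = mu i := by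
            rw [dif_pos i.2]
          rw [hh]
      · exact (Set.empty_subset _)
  rw [hdecomp]
  apply isClosed_iUnion_of_finite
  intro s
  split_ifs with hind
  · have hclosed : IsClosed {mu : { x // x ∈ s } → ℝ | ∀ i, 0 ≤ mu i} := by
      have : {mu : { x // x ∈ s } → ℝ | ∀ i, 0 ≤ mu i} =
          ⋂ i, {mu : { x // x ∈ s } → ℝ | 0 ≤ mu i} := by
        ext mu; simp [Set.mem_iInter]
      rw [this]
      exact isClosed_iInter fun i => isClosed_le continuous_const (continuous_apply i)
    exact ((combMap a s).isClosedEmbedding_of_injective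
      ((LinearMap.ker_eq_bot (M := { x // x ∈ s } → ℝ)).2 (combMap_inj hind))).isClosedMap
      _ hclosed
  · exact isClosed_empty

open scoped RealInnerProductSpace

/-- The finitely generated cone as a `ConvexCone`. -/
noncomputable def coneGenCone (a : Fin k → E) : ConvexCone ℝ E where
  carrier := coneGen a
  smul_mem' := by
    rintro c hc x ⟨l, hl, rfl⟩
    exact ⟨fun i => c * l i, fun i => mul_nonneg hc.le (hl i), by
      rw [Finset.smul_sum]; exact Finset.sum_congr rfl fun i _ => (mul_smul c (l i) (a i)).symm⟩
  add_mem' := by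
    rintro x ⟨l, hl, rfl⟩ y ⟨l', hl', rfl⟩
    exact ⟨fun i => l i + l' i, fun i => add_nonneg (hl i) (hl' i), by
      rw [← Finset.sum_add_distrib]
      exact Finset.sum_congr rfl fun i _ => (add_smul (l i) (l' i) (a i)).symm⟩

theorem coneGen_nonempty (a : Fin k → E) : (coneGen a).Nonempty :=
  ⟨∑ i, (0:ℝ) • a i, ⟨fun _ => 0, fun _ => le_refl 0, rfl⟩⟩

noncomputable def coneGenProper (a : Fin k → E) : ProperCone ℝ E where
  carrier := coneGen a
  add_mem' := fun hx hy => (coneGenCone a).add_mem' hx hy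
  zero_mem' := ⟨fun _ => 0, fun _ => le_refl 0, by simp⟩
  smul_mem' := by
    rintro c x ⟨l, hl, rfl⟩
    refine ⟨fun i => (c : ℝ) * l i, fun i => mul_nonneg c.2 (hl i), ?_⟩
    show (c : ℝ) • (∑ i, l i • a i) = _
    rw [Finset.smul_sum]; exact Finset.sum_congr rfl fun i _ => (mul_smul (c : ℝ) (l i) (a i)).symm
  isClosed' := coneGen_isClosed a

/-- Hoffman's error bound. -/
theorem hoffman [CompleteSpace E] (a : Fin k → E) (c : Fin k → ℝ)
    (hne : {x : E | ∀ i, ⟪a i, x⟫ ≤ c i}.Nonempty) :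
    ∃ C > (0:ℝ), ∀ x : E, Metric.infDist x {x : E | ∀ i, ⟪a i, x⟫ ≤ c i}
      ≤ C * ∑ i, max (⟪a i, x⟫ - c i) 0 := by
  classical
  set S := {x : E | ∀ i, ⟪a i, x⟫ ≤ c i} with hSdef
  have hconv : Convex ℝ S := by
    have : S = ⋂ i, {x : E | ⟪a i, x⟫ ≤ c i} := by ext x; simp [hSdef, Set.mem_iInter]
    rw [this]
    exact convex_iInter fun i => convex_halfSpace_le
      ⟨fun x y => inner_add_right _ _ _, fun r x => real_inner_smul_right _ _ _⟩ (c i)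
  have hclosed : IsClosed S := by
    have : S = ⋂ i, {x : E | ⟪a i, x⟫ ≤ c i} := by ext x; simp [hSdef, Set.mem_iInter]
    rw [this]
    exact isClosed_iInter fun i =>
      isClosed_le (continuous_const.inner continuous_id) continuous_const
  -- choose a uniform constant
  have hDex : ∀ s : Finset (Fin k), ∃ C > (0:ℝ),
      LinearIndependent ℝ (fun i : s => a (i : Fin k)) → ∀ mu : Fin k → ℝ,
        (∀ i ∉ s, mu i = 0) → ∑ i, |mu i| ≤ C * ‖∑ i, mu i • a i‖ := by
    intro s
    by_cases h : LinearIndependent ℝ (fun i : s => a (i : Fin k))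
    · obtain ⟨C, hC, hb⟩ := exists_l1_bound a s h
      exact ⟨C, hC, fun _ => hb⟩
    · exact ⟨1, one_pos, fun h' => absurd h' h⟩
  choose D hD0 hD using hDex
  set C := ∑ s : Finset (Fin k), D s with hCdef
  have hCpos : 0 < C := Finset.sum_pos (fun s _ => hD0 s) ⟨∅, Finset.mem_univ _⟩
  have hCge : ∀ s : Finset (Fin k), D s ≤ C := fun s =>
    Finset.single_le_sum (fun s _ => (hD0 s).le) (Finset.mem_univ s)
  refine ⟨C, hCpos, fun x => ?_⟩
  set R := ∑ i, max (⟪a i, x⟫ - c i) 0 with hRdef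
  have hR0 : 0 ≤ R := Finset.sum_nonneg fun i _ => le_max_right _ _
  -- projection
  obtain ⟨v, hvS, hv⟩ := exists_norm_eq_iInf_of_complete_convex hne hclosed.isComplete hconv x
  have hproj : ∀ w ∈ S, ⟪x - v, w - v⟫ ≤ 0 :=
    (norm_eq_iInf_iff_real_inner_le_zero hconv hvS).1 hv
  have hdist : Metric.infDist x S = ‖x - v‖ := by
    rw [Metric.infDist_eq_iInf, hv]
    congr 1; funext w; rw [dist_eq_norm]
  rw [hdist]
  set d := x - v with hddef
  -- active constraints
  set A : Finset (Fin k) := Finset.univ.filter (fun i => ⟪a i, v⟫ = c i) with hAdef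
  set a' : Fin k → E := fun i => if i ∈ A then a i else 0 with ha'def
  -- d is in the cone generated by the active constraints
  have hd_in : d ∈ coneGen a' := by
    by_contra hd
    obtain ⟨y, hy1, hy2⟩ := (coneGenProper a').hyperplane_separation' (x₀ := d) (by exact hd)
    rw [real_inner_comm] at hy2
    set z := -y with hzdef
    have hAz : ∀ i ∈ A, ⟪a i, z⟫ ≤ 0 := by
      intro i hi
      have hmem : a i ∈ coneGen a' := by
        refine ⟨fun j => if j = i then 1 else 0, fun j => by dsimp only; split_ifs <;> norm_num, ?_⟩
        have hsum : ∑ j, (fun j => if j = i then (1:ℝ) else 0) j • a' j = a' i := by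
          simp only [ite_smul, one_smul, zero_smul, Finset.sum_ite_eq', Finset.mem_univ, if_true]
        rw [hsum, ha'def]
        simp [hi]
      have := hy1 (a i) hmem
      have h2 : ⟪a i, z⟫ = -⟪a i, y⟫ := by rw [hzdef, inner_neg_right]
      rw [h2]
      linarith [real_inner_comm (a i) y ▸ this]
    -- find a small positive step
    obtain ⟨t, ht0, ht⟩ : ∃ t > (0:ℝ), ∀ i ∉ A, ⟪a i, v⟫ + t * ⟪a i, z⟫ ≤ c i := by
      set T := Finset.univ.filter (fun i => i ∉ A ∧ 0 < ⟪a i, z⟫) with hTdef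
      have hslack : ∀ i ∉ A, ⟪a i, v⟫ < c i := by
        intro i hi
        rcases lt_or_eq_of_le (hvS i) with h | h
        · exact h
        · exact absurd (Finset.mem_filter.2 ⟨Finset.mem_univ i, h⟩) hi
      by_cases hT : T.Nonempty
      · have htpos : 0 < min 1 (T.inf' hT fun i => (c i - ⟪a i, v⟫) / ⟪a i, z⟫) := by
          refine lt_min one_pos ((Finset.lt_inf'_iff hT).2 fun i hi => ?_)
          obtain ⟨hiA, hiz⟩ := (Finset.mem_filter.1 hi).2
          exact div_pos (sub_pos.2 (hslack i hiA)) hiz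
        refine ⟨min 1 (T.inf' hT fun i => (c i - ⟪a i, v⟫) / ⟪a i, z⟫), htpos, ?_⟩
        · intro i hiA
          by_cases hz : 0 < ⟪a i, z⟫
          · have hiT : i ∈ T := Finset.mem_filter.2 ⟨Finset.mem_univ i, hiA, hz⟩
            have h1 : min 1 (T.inf' hT fun i => (c i - ⟪a i, v⟫) / ⟪a i, z⟫)
                ≤ (c i - ⟪a i, v⟫) / ⟪a i, z⟫ :=
              (min_le_right _ _).trans (Finset.inf'_le _ hiT)
            have h2 := mul_le_mul_of_nonneg_right h1 hz.le
            rw [div_mul_cancel₀ _ hz.ne'] at h2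
            linarith
          · push_neg at hz
            have h1 : min 1 (T.inf' hT fun i => (c i - ⟪a i, v⟫) / ⟪a i, z⟫) * ⟪a i, z⟫ ≤ 0 :=
              mul_nonpos_of_nonneg_of_nonpos htpos.le hz
            linarith [hslack i hiA]
      · refine ⟨1, one_pos, fun i hiA => ?_⟩
        have hz : ⟪a i, z⟫ ≤ 0 := by
          by_contra hzc
          push_neg at hzc
          exact hT ⟨i, Finset.mem_filter.2 ⟨Finset.mem_univ i, hiA, hzc⟩⟩
        linarith [hslack i hiA]
    have hwS : v + t • z ∈ S := by
      intro i
      rw [inner_add_right, real_inner_smul_right]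
      by_cases hiA : i ∈ A
      · have := hAz i hiA
        have heq : ⟪a i, v⟫ = c i := (Finset.mem_filter.1 hiA).2
        nlinarith
      · exact ht i hiA
    have := hproj _ hwS
    rw [add_sub_cancel_left, real_inner_smul_right] at this
    have hdz : 0 < ⟪d, z⟫ := by
      have h2 : ⟪d, z⟫ = -⟪y, d⟫ := by
        rw [hzdef, inner_neg_right, real_inner_comm]
      rw [h2]; linarith
    nlinarith
  obtain ⟨l, hl0, hld⟩ := hd_in
  set l' : Fin k → ℝ := fun i => if i ∈ A then l i else 0 with hl'def
  have hl'0 : ∀ i, 0 ≤ l' i := fun i => by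
    by_cases hi : i ∈ A
    · simpa [hl'def, hi] using hl0 i
    · simp [hl'def, hi]
  have hl'A : ∀ i ∉ A, l' i = 0 := fun i hi => by simp [hl'def, hi]
  have hld' : d = ∑ i, l' i • a i := by
    rw [hld]
    refine Finset.sum_congr rfl fun i _ => ?_
    by_cases hi : i ∈ A
    · simp [hl'def, ha'def, hi]
    · simp [hl'def, ha'def, hi]
  obtain ⟨s, hsA, mu, hmu0, hmus, hmusum, hind⟩ := conic_caratheodory a A l' hl'0 hl'A
  have hmud : ∑ i, mu i • a i = d := hmusum.trans hld'.symm
  have hterm : ∀ i, mu i * (⟪a i, x⟫ - ⟪a i, v⟫) ≤ mu i * R := by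
    intro i
    rcases eq_or_lt_of_le (hmu0 i) with h0 | h0
    · rw [← h0]; simp
    · have his : i ∈ s := by
        by_contra hns
        exact h0.ne (hmus i hns).symm
      have hiA : i ∈ A := hsA his
      have heq : ⟪a i, v⟫ = c i := (Finset.mem_filter.1 hiA).2
      have hle : ⟪a i, x⟫ - ⟪a i, v⟫ ≤ R := by
        rw [heq]
        calc ⟪a i, x⟫ - c i ≤ max (⟪a i, x⟫ - c i) 0 := le_max_left _ _
          _ ≤ R := Finset.single_le_sum (f := fun j => max (⟪a j, x⟫ - c j) 0)
              (fun j _ => le_max_right _ _) (Finset.mem_univ i)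
      exact mul_le_mul_of_nonneg_left hle h0.le
  have hdd : ⟪d, d⟫ = ∑ i, mu i * (⟪a i, x⟫ - ⟪a i, v⟫) := by
    nth_rewrite 1 [← hmud]
    rw [sum_inner]
    refine Finset.sum_congr rfl fun i _ => ?_
    rw [real_inner_smul_left, hddef, inner_sub_right]
  have hl1 : ∑ i, mu i ≤ C * ‖d‖ := by
    have h1 : ∑ i, mu i = ∑ i, |mu i| :=
      Finset.sum_congr rfl fun i _ => (abs_of_nonneg (hmu0 i)).symm
    rw [h1]
    calc ∑ i, |mu i| ≤ D s * ‖∑ i, mu i • a i‖ := hD s hind mu hmus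
      _ = D s * ‖d‖ := by rw [hmud]
      _ ≤ C * ‖d‖ := mul_le_mul_of_nonneg_right (hCge s) (norm_nonneg d)
  have hkey : ‖d‖ ^ 2 ≤ C * ‖d‖ * R := by
    calc ‖d‖ ^ 2 = ⟪d, d⟫ := (real_inner_self_eq_norm_sq d).symm
      _ = ∑ i, mu i * (⟪a i, x⟫ - ⟪a i, v⟫) := hdd
      _ ≤ ∑ i, mu i * R := Finset.sum_le_sum fun i _ => hterm i
      _ = (∑ i, mu i) * R := (Finset.sum_mul _ _ _).symm
      _ ≤ C * ‖d‖ * R := mul_le_mul_of_nonneg_right hl1 hR0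
  rcases eq_or_lt_of_le (norm_nonneg d) with h0 | h0
  · rw [← h0]; positivity
  · nlinarith

end ConeLemmas

noncomputable def toE {d : ℕ} (v : Fin d → ℝ) : EuclideanSpace ℝ (Fin d) :=
  (WithLp.equiv 2 _).symm v

open scoped RealInnerProductSpace

theorem toE_sub {d : ℕ} (u v : Fin d → ℝ) : toE (u - v) = toE u - toE v := rfl

theorem toE_zero {d : ℕ} : toE (0 : Fin d → ℝ) = 0 := rfl

theorem toE_apply {d : ℕ} (v : Fin d → ℝ) (i : Fin d) : toE v i = v i := rfl

theorem en_toE {d : ℕ} (v : Fin d → ℝ) : en v = ‖toE v‖ := by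
  rw [EuclideanSpace.norm_eq, en]
  congr 1
  exact Finset.sum_congr rfl fun i _ => by
    rw [toE_apply, Real.norm_eq_abs, sq_abs]

theorem inner_toE {d : ℕ} (a x : Fin d → ℝ) : ⟪toE a, toE x⟫ = a ⬝ᵥ x := by
  rw [PiLp.inner_apply, dotProduct]
  exact Finset.sum_congr rfl fun i _ => by
    rw [toE_apply, toE_apply, RCLike.inner_apply, conj_trivial, mul_comm]

theorem distE_eq {d : ℕ} (u : Fin d → ℝ) (S : Set (Fin d → ℝ)) :
    distE u S = Metric.infDist (toE u) (toE '' S) := by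
  rw [Metric.infDist_eq_iInf, iInf, distE]
  congr 1
  rw [← Set.image_eq_range, ← Set.image_comp]
  exact Set.image_congr fun s _ => by
    simp only [Function.comp_apply, dist_eq_norm, ← toE_sub, en_toE]

theorem norm_le_toE {d : ℕ} (v : Fin d → ℝ) : ‖v‖ ≤ ‖toE v‖ := by
  refine pi_norm_le_iff_of_nonneg (norm_nonneg _) |>.2 fun i => ?_
  rw [Real.norm_eq_abs, ← Real.sqrt_sq_eq_abs, ← en_toE, en]
  exact Real.sqrt_le_sqrt (Finset.single_le_sum (f := fun j => v j ^ 2)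
    (fun j _ => sq_nonneg _) (Finset.mem_univ i))

theorem toE_norm_le {d : ℕ} (v : Fin d → ℝ) : ‖toE v‖ ≤ Real.sqrt d * ‖v‖ := by
  rw [← en_toE, en]
  have h : ∑ i, v i ^ 2 ≤ (d : ℝ) * ‖v‖ ^ 2 := by
    calc ∑ i, v i ^ 2 ≤ ∑ _i : Fin d, ‖v‖ ^ 2 := by
          refine Finset.sum_le_sum fun i _ => ?_
          rw [← sq_abs, ← Real.norm_eq_abs]
          exact pow_le_pow_left₀ (norm_nonneg _) (norm_le_pi_norm v i) 2
      _ = (d : ℝ) * ‖v‖ ^ 2 := by simp [mul_comm]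
  calc Real.sqrt (∑ i, v i ^ 2) ≤ Real.sqrt ((d : ℝ) * ‖v‖ ^ 2) := Real.sqrt_le_sqrt h
    _ = Real.sqrt d * ‖v‖ := by
        rw [Real.sqrt_mul (Nat.cast_nonneg d), Real.sqrt_sq (norm_nonneg v)]

end Aux

open scoped RealInnerProductSpace

theorem polyhedral_error_bound
    (n m : ℕ) (F : (Fin n → ℝ) → Set (Fin m → ℝ))
    (P : Finset (Set ((Fin n → ℝ) × (Fin m → ℝ))))
    (hP : ∀ p ∈ P, IsPolyhedron p)
    (hgraph : {z : (Fin n → ℝ) × (Fin m → ℝ) | z.2 ∈ F z.1} = ⋃ p ∈ P, p)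
    (hroot : {u | (0 : Fin m → ℝ) ∈ F u}.Nonempty) :
    ∀ U : Set (Fin n → ℝ), Bornology.IsBounded U →
      ∃ ψ > (0:ℝ), ∀ u ∈ U, (F u).Nonempty →
        distE u {w | (0 : Fin m → ℝ) ∈ F w} ≤ ψ * distE 0 (F u) := by
  classical
  intro U hU
  set Z := {w : Fin n → ℝ | (0 : Fin m → ℝ) ∈ F w} with hZdef
  obtain ⟨w₀, hw₀⟩ := hroot
  have hw₀Z : w₀ ∈ Z := hw₀
  obtain ⟨r, hr⟩ := (Metric.isBounded_iff_subset_closedBall w₀).1 hU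
  set M : ℝ := Real.sqrt n * max r 0 with hMdef
  have hM0 : 0 ≤ M := mul_nonneg (Real.sqrt_nonneg _) (le_max_right _ _)
  have hM : ∀ u ∈ U, dist (toE u) (toE w₀) ≤ M := by
    intro u hu
    rw [dist_eq_norm, ← toE_sub]
    calc ‖toE (u - w₀)‖ ≤ Real.sqrt n * ‖u - w₀‖ := toE_norm_le _
      _ ≤ M := by
        apply mul_le_mul_of_nonneg_left _ (Real.sqrt_nonneg _)
        have h1 := hr hu
        rw [Metric.mem_closedBall] at h1
        rw [← dist_eq_norm]
        exact h1.trans (le_max_left _ _)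
  have hmem_graph : ∀ u v, v ∈ F u ↔ ∃ p ∈ P, (u, v) ∈ p := by
    intro u v
    have := Set.ext_iff.1 hgraph (u, v)
    simpa using this
  have key : ∀ p ∈ P, ∃ ψp, 0 ≤ ψp ∧ ∀ u ∈ U, ∀ v : Fin m → ℝ, (u, v) ∈ p →
      distE u Z ≤ ψp * en v := by
    intro p hp
    obtain ⟨k, ab, c, hpc⟩ := hP p hp
    set aE : Fin k → EuclideanSpace ℝ (Fin n) := fun i => toE (ab i).1 with haE
    set SE : Set (EuclideanSpace ℝ (Fin n)) := {x | ∀ i, ⟪aE i, x⟫ ≤ c i} with hSEdef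
    set S₀ : Set (Fin n → ℝ) := {u | ∀ i, (ab i).1 ⬝ᵥ u ≤ c i} with hS₀def
    have hSE : SE = toE '' S₀ := by
      ext x
      constructor
      · intro hx
        refine ⟨(WithLp.equiv 2 _) x, fun i => ?_, rfl⟩
        have := hx i
        rwa [show x = toE ((WithLp.equiv 2 _) x) from rfl, inner_toE] at this
      · rintro ⟨u', hu', rfl⟩
        intro i
        rw [haE, inner_toE]
        exact hu' i
    have hS₀Z : S₀ ⊆ Z := by
      intro u' hu'
      have hup : (u', (0 : Fin m → ℝ)) ∈ p := by
        rw [hpc]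
        intro i
        simpa using hu' i
      exact (hmem_graph u' 0).2 ⟨p, hp, hup⟩
    have hp_closed : IsClosed p := by
      rw [hpc]
      have hrw : {z : (Fin n → ℝ) × (Fin m → ℝ) | ∀ i, (ab i).1 ⬝ᵥ z.1 + (ab i).2 ⬝ᵥ z.2 ≤ c i}
          = ⋂ i, {z : (Fin n → ℝ) × (Fin m → ℝ) | (ab i).1 ⬝ᵥ z.1 + (ab i).2 ⬝ᵥ z.2 ≤ c i} := by
        ext z; simp [Set.mem_iInter]
      rw [hrw]
      refine isClosed_iInter fun i => isClosed_le ?_ continuous_const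
      have h1 : Continuous fun z : (Fin n → ℝ) × (Fin m → ℝ) => ∑ j, (ab i).1 j * z.1 j :=
        continuous_finset_sum _ fun j _ =>
          continuous_const.mul ((continuous_apply j).comp continuous_fst)
      have h2 : Continuous fun z : (Fin n → ℝ) × (Fin m → ℝ) => ∑ j, (ab i).2 j * z.2 j :=
        continuous_finset_sum _ fun j _ =>
          continuous_const.mul ((continuous_apply j).comp continuous_snd)
      exact h1.add h2
    by_cases hSEne : SE.Nonempty
    · obtain ⟨C, hC, hCb⟩ := hoffman aE c hSEne
      set B : ℝ := ∑ i, ‖toE (ab i).2‖ with hBdef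
      have hB0 : 0 ≤ B := Finset.sum_nonneg fun i _ => norm_nonneg _
      refine ⟨C * B, mul_nonneg hC.le hB0, fun u hu v huv => ?_⟩
      have hS₀ne : S₀.Nonempty := by
        obtain ⟨x, hx⟩ := hSEne
        rw [hSE] at hx
        obtain ⟨u', hu', -⟩ := hx
        exact ⟨u', hu'⟩
      rw [distE_eq]
      have h1 : Metric.infDist (toE u) (toE '' Z) ≤ Metric.infDist (toE u) (toE '' S₀) :=
        Metric.infDist_le_infDist_of_subset (Set.image_mono hS₀Z) (hS₀ne.image _)
      have h2 : Metric.infDist (toE u) (toE '' S₀) ≤ C * ∑ i, max (⟪aE i, toE u⟫ - c i) 0 := by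
        rw [← hSE]
        exact hCb (toE u)
      have h3 : ∑ i, max (⟪aE i, toE u⟫ - c i) 0 ≤ B * en v := by
        rw [hBdef, Finset.sum_mul]
        refine Finset.sum_le_sum fun i _ => ?_
        have hcon : (ab i).1 ⬝ᵥ u + (ab i).2 ⬝ᵥ v ≤ c i := by
          rw [hpc] at huv
          exact huv i
        have hiv : ⟪aE i, toE u⟫ = (ab i).1 ⬝ᵥ u := inner_toE _ _
        have hbv : ((ab i).2 : Fin m → ℝ) ⬝ᵥ v = ⟪toE (ab i).2, toE v⟫ := (inner_toE _ _).symm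
        have habs := abs_real_inner_le_norm (toE (ab i).2) (toE v)
        rw [en_toE]
        refine max_le ?_ (by positivity)
        rw [hiv]
        have h4 := (abs_le.1 habs).1
        rw [← hbv] at h4
        linarith
      calc Metric.infDist (toE u) (toE '' Z)
          ≤ C * (B * en v) := h1.trans (h2.trans (mul_le_mul_of_nonneg_left h3 hC.le))
        _ = C * B * en v := by ring
    · have hclU : IsCompact (closure U) := hU.isCompact_closure
      set K := (closure U ×ˢ Metric.closedBall (0 : Fin m → ℝ) 1) ∩ p with hKdef
      have hK : IsCompact K := (hclU.prod (isCompact_closedBall _ _)).inter_right hp_closed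
      obtain ⟨δ, hδ0, hδ⟩ : ∃ δ > (0:ℝ), ∀ u ∈ U, ∀ v : Fin m → ℝ, (u, v) ∈ p → δ ≤ ‖v‖ := by
        by_cases hKne : K.Nonempty
        · obtain ⟨z₀, hz₀K, hz₀min⟩ := hK.exists_isMinOn hKne
            (continuous_snd.norm.continuousOn (s := K))
          have hz₀pos : 0 < ‖z₀.2‖ := by
            rcases eq_or_lt_of_le (norm_nonneg z₀.2) with h0 | h0
            · exfalso
              have hz2 : z₀.2 = 0 := norm_eq_zero.1 h0.symm
              have hz0p : (z₀.1, (0 : Fin m → ℝ)) ∈ p := by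
                rw [← hz2]
                exact hz₀K.2
              apply hSEne
              refine ⟨toE z₀.1, fun i => ?_⟩
              rw [haE, inner_toE]
              rw [hpc] at hz0p
              have := hz0p i
              simpa using this
            · exact h0
          refine ⟨min ‖z₀.2‖ 1, lt_min hz₀pos one_pos, fun u hu v huv => ?_⟩
          by_cases hv1 : ‖v‖ ≤ 1
          · have hmemK : (u, v) ∈ K :=
              ⟨⟨subset_closure hu, by simpa [Metric.mem_closedBall, dist_zero_right] using hv1⟩,
                huv⟩
            exact (min_le_left _ _).trans (hz₀min hmemK)
          · push_neg at hv1
            exact (min_le_right _ _).trans hv1.le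
        · refine ⟨1, one_pos, fun u hu v huv => ?_⟩
          by_contra hlt
          push_neg at hlt
          refine hKne ⟨(u, v), ⟨⟨subset_closure hu, ?_⟩, huv⟩⟩
          rw [Metric.mem_closedBall, dist_zero_right]
          linarith
      refine ⟨M / δ, div_nonneg hM0 hδ0.le, fun u hu v huv => ?_⟩
      have h1 : distE u Z ≤ M := by
        rw [distE_eq]
        exact (Metric.infDist_le_dist_of_mem (s := toE '' Z) (y := toE w₀) ⟨w₀, hw₀Z, rfl⟩).trans (hM u hu)
      have h2 : δ ≤ en v := by
        rw [en_toE]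
        exact (hδ u hu v huv).trans (norm_le_toE v)
      calc distE u Z ≤ M := h1
        _ = (M / δ) * δ := by field_simp
        _ ≤ (M / δ) * en v := mul_le_mul_of_nonneg_left h2 (div_nonneg hM0 hδ0.le)
  choose! ψf hψf0 hψfb using key
  set ψ : ℝ := 1 + ∑ p ∈ P, ψf p with hψdef
  have hsum0 : 0 ≤ ∑ p ∈ P, ψf p := Finset.sum_nonneg fun p hp => hψf0 p hp
  have hψpos : 0 < ψ := by rw [hψdef]; linarith
  have hψge : ∀ p ∈ P, ψf p ≤ ψ := by
    intro p hp
    have h1 : ψf p ≤ ∑ q ∈ P, ψf q := Finset.single_le_sum (fun q hq => hψf0 q hq) hp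
    rw [hψdef]; linarith
  refine ⟨ψ, hψpos, fun u hu hFu => ?_⟩
  have hen0 : ∀ v : Fin m → ℝ, 0 ≤ en v := fun v => Real.sqrt_nonneg _
  have hv : ∀ v ∈ F u, distE u Z ≤ ψ * en v := by
    intro v hvF
    obtain ⟨p, hp, hup⟩ := (hmem_graph u v).1 hvF
    calc distE u Z ≤ ψf p * en v := hψfb p hp u hu v hup
      _ ≤ ψ * en v := mul_le_mul_of_nonneg_right (hψge p hp) (hen0 v)
  have hne' : (toE '' F u).Nonempty := hFu.image _
  haveI : Nonempty (toE '' F u : Set (EuclideanSpace ℝ (Fin m))) := hne'.to_subtype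
  have hfin : distE u Z / ψ ≤ Metric.infDist (toE (0 : Fin m → ℝ)) (toE '' F u) := by
    rw [Metric.infDist_eq_iInf]
    refine le_ciInf fun y => ?_
    obtain ⟨v, hvF, hy⟩ := y.2
    have hdy : dist (toE (0 : Fin m → ℝ)) (y : EuclideanSpace ℝ (Fin m)) = en v := by
      rw [← hy, dist_eq_norm, ← toE_sub, ← en_toE, en]
      rw [en]
      congr 1
      refine Finset.sum_congr rfl fun i _ => ?_
      simp [neg_sq]
    rw [hdy, div_le_iff₀ hψpos]
    calc distE u Z ≤ ψ * en v := hv v hvF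
      _ = en v * ψ := mul_comm _ _
  rw [distE_eq (0 : Fin m → ℝ) (F u)]
  calc distE u Z = (distE u Z / ψ) * ψ := by field_simp
    _ ≤ Metric.infDist (toE (0 : Fin m → ℝ)) (toE '' F u) * ψ :=
        mul_le_mul_of_nonneg_right hfin hψpos.le
    _ = ψ * Metric.infDist (toE (0 : Fin m → ℝ)) (toE '' F u) := mul_comm _ _
end
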